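/- Assume Σ_A⁺ is transitive, let φ : Σ_A⁺ → ℝ be Hölder, and let (P, μ) be a conformal pair for φ. Let n ≥ 1 and let v, w be admissible words of length n. Let Dom = {z ∈ [v] : A (w (n−1)) (z n)} and define T : Dom → [w] by (T z) i = w i for i < n and (T z) i = z i for i ≥ n (so that σⁿ(T z) = σⁿ(z)). Then T is injective, and for every Borel set E ⊆ Dom one has μ(T '' E) = ∫_E exp( Σ_{k=0}^{n−1} ( φ(σ^k (T z)) − φ(σ^k z) ) ) dμ(z). -/

import Mathlib

open MeasureTheory Real
open scoped ENNReal

variable {r : ℕ}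

/-- The one-sided subshift of finite type determined by the transition
matrix `A`. -/
abbrev OneSided (A : Fin r → Fin r → Prop) : Type :=
  {x : ℕ → Fin r // ∀ i, A (x i) (x (i + 1))}

/-- The shift map `σ` on the one-sided subshift. -/
def shift1 {A : Fin r → Fin r → Prop} (x : OneSided A) : OneSided A :=
  ⟨fun i => x.1 (i + 1), fun i => x.2 (i + 1)⟩

/-- The metric `d(x,y) = ∑_{i ∈ ℕ, x i ≠ y i} 2^{-i}` on the one-sided
subshift. -/
noncomputable def dist1 {A : Fin r → Fin r → Prop} (x y : OneSided A) : ℝ :=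
  ∑' i : ℕ, if x.1 i ≠ y.1 i then ((2 : ℝ)⁻¹) ^ i else 0

/-- `ψ` is Hölder with respect to the distance function `d`. -/
def IsHolderWrt {X : Type*} (d : X → X → ℝ) (ψ : X → ℝ) : Prop :=
  ∃ C > 0, ∃ α ∈ Set.Ioc (0 : ℝ) 1, ∀ x y, |ψ x - ψ y| ≤ C * d x y ^ α

/-- A word `w : Fin n → Fin r` is admissible if `A (w i) (w (i+1))` for all
`i < n − 1`. -/
def AdmissibleWord {n : ℕ} (A : Fin r → Fin r → Prop) (w : Fin n → Fin r) : Prop :=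
  ∀ i : ℕ, ∀ h : i + 1 < n, A (w ⟨i, Nat.lt_of_succ_lt h⟩) (w ⟨i + 1, h⟩)

/-- The `n`-cylinder `[w]` of a word `w : Fin n → Fin r`. -/
def Cyl (A : Fin r → Fin r → Prop) {n : ℕ} (w : Fin n → Fin r) : Set (OneSided A) :=
  {x | ∀ i : Fin n, x.1 i = w i}

/-- `(P, μ)` is a conformal pair for `φ`: `μ` is a Borel probability measure
with `μ(σ '' E) = ∫_E exp(P − φ) dμ` for every Borel `E` contained in a
1-cylinder.  This encodes `log(dμ(σx)/dμ(x)) = −φ(x) + P`. -/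
def ConformalPair (A : Fin r → Fin r → Prop) (φ : OneSided A → ℝ) (P : ℝ)
    (μ : Measure (OneSided A)) : Prop :=
  IsProbabilityMeasure μ ∧
    ∀ (j : Fin r) (E : Set (OneSided A)), MeasurableSet E → (∀ x ∈ E, x.1 0 = j) →
      μ (shift1 '' E) = ∫⁻ x in E, ENNReal.ofReal (Real.exp (P - φ x)) ∂μ

/-- `Σ_A⁺` is transitive: some point has dense forward orbit under `σ`. -/
def Transitive1 (A : Fin r → Fin r → Prop) : Prop :=
  ∃ x : OneSided A, Dense (Set.range fun n : ℕ => shift1^[n] x)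

/-- `Σ_A⁺` is mixing with constant `M`: for all symbols `i`, `j` there is an
admissible word of length `M+1` beginning with `i` and ending with `j`. -/
def MixingWith (A : Fin r → Fin r → Prop) (M : ℕ) : Prop :=
  1 ≤ M ∧ ∀ i j : Fin r, ∃ w : Fin (M + 1) → Fin r,
    AdmissibleWord A w ∧ w 0 = i ∧ w (Fin.last M) = j


open Classical in
/-- The map `T` on `{z ∈ [v] : A (w (n−1)) (z n)}` replacing the first `n`
coordinates of `z` by the word `w` (so that `σⁿ(T z) = σⁿ(z)`); off that
domain it is extended by the identity. -/
noncomputable def Tmap {A : Fin r → Fin r → Prop} {n : ℕ} (hn : 1 ≤ n)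
    (w : Fin n → Fin r) (hw : AdmissibleWord A w) (z : OneSided A) : OneSided A :=
  if hlink : A (w ⟨n - 1, by omega⟩) (z.1 n) then
    ⟨fun i => if h : i < n then w ⟨i, h⟩ else z.1 i, by
      intro i
      rcases lt_trichotomy (i + 1) n with h | h | h
      · have h1 : i < n := by omega
        simp only [dif_pos h1, dif_pos h]
        exact hw i h
      · have h1 : i < n := by omega
        have h2 : ¬ i + 1 < n := by omega
        simp only [dif_pos h1, dif_neg h2]
        have e1 : (⟨i, h1⟩ : Fin n) = ⟨n - 1, by omega⟩ := by
          apply Fin.ext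
          show i = n - 1
          omega
        have hz : z.1 (i + 1) = z.1 n := by rw [h]
        rw [e1, hz]
        exact hlink
      · have h1 : ¬ i < n := by omega
        have h2 : ¬ i + 1 < n := by omega
        simp only [dif_neg h1, dif_neg h2]
        exact z.2 i⟩
  else z

open Filter Topology

/-! `T` is `σⁿ` on `Dom ⊆ [v]` followed by the inverse branch of `σⁿ` with values in `[w]`.
Iterating the conformality relation gives, for Borel `F` inside an `n`-cylinder and measurable `g`,
`∫_{σⁿ F} g dμ = ∫_F g ∘ σⁿ · exp(nP − Sₙφ) dμ`, with `Sₙφ` the Birkhoff sum. Since `T '' E` and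
`E` have the same image under `σⁿ`, applying this to both sets writes `μ(T '' E)` and the integral
over `E` as one and the same integral over `σⁿ '' E`. -/

namespace OneSided

variable {A : Fin r → Fin r → Prop}

lemma shift1_iterate_coe (m : ℕ) (x : OneSided A) (i : ℕ) :
    (shift1^[m] x).1 i = x.1 (i + m) := by
  induction m generalizing x with
  | zero => rfl
  | succ m ih => rw [Function.iterate_succ_apply, ih]; rfl

lemma measurable_coord (i : ℕ) : Measurable fun x : OneSided A => x.1 i :=
  (measurable_pi_apply i).comp measurable_subtype_coe

lemma continuous_shift1 : Continuous (shift1 : OneSided A → OneSided A) :=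
  (continuous_pi fun i => (continuous_apply (i + 1)).comp continuous_subtype_val).subtype_mk
    (f := fun x : OneSided A => fun i => x.1 (i + 1)) _

lemma measurable_shift1 : Measurable (shift1 : OneSided A → OneSided A) :=
  continuous_shift1.measurable

lemma measurableSet_cyl {n : ℕ} (u : Fin n → Fin r) : MeasurableSet (Cyl A u) := by
  simp only [Cyl, Set.ofPred_forall]
  exact .iInter fun i => measurableSet_eq_fun (measurable_coord i) measurable_const

lemma continuous_dist1 : Continuous fun p : OneSided A × OneSided A => dist1 p.1 p.2 := by
  refine continuous_tsum (u := fun i => (2⁻¹ : ℝ) ^ i) (fun i => ?_)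
    (summable_geometric_of_lt_one (by norm_num) (by norm_num)) (fun i p => ?_)
  · have hcoord : Continuous fun p : OneSided A × OneSided A => (p.1.1 i, p.2.1 i) :=
      ((continuous_apply i).comp (continuous_subtype_val.comp continuous_fst)).prodMk
        ((continuous_apply i).comp (continuous_subtype_val.comp continuous_snd))
    exact (continuous_of_discreteTopology (f := fun q : Fin r × Fin r =>
      if q.1 ≠ q.2 then (2⁻¹ : ℝ) ^ i else 0)).comp hcoord
  · split_ifs <;> simp

lemma dist1_self (x : OneSided A) : dist1 x x = 0 := by
  simp [dist1]

lemma continuous_of_isHolderWrt {φ : OneSided A → ℝ} (hφ : IsHolderWrt dist1 φ) :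
    Continuous φ := by
  obtain ⟨C, -, α, hα, hHolder⟩ := hφ
  refine continuous_iff_continuousAt.2 fun x => tendsto_iff_norm_sub_tendsto_zero.2 ?_
  have hdist : Tendsto (fun y => dist1 y x) (𝓝 x) (𝓝 0) := by
    simpa [Function.comp_def, dist1_self] using
      (continuous_dist1.comp (continuous_id.prodMk (continuous_const (y := x)))).tendsto x
  have hbound : Tendsto (fun y => C * dist1 y x ^ α) (𝓝 x) (𝓝 0) := by
    simpa [Real.zero_rpow hα.1.ne'] using (hdist.rpow_const (Or.inr hα.1.le)).const_mul C
  exact squeeze_zero (fun _ => norm_nonneg _) (fun y => hHolder y x) hbound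

def prependSeq {n : ℕ} (u : Fin n → Fin r) (x : ℕ → Fin r) : ℕ → Fin r :=
  fun i => if h : i < n then u ⟨i, h⟩ else x (i - n)

def prependable {n : ℕ} (u : Fin n → Fin r) : Set (OneSided A) :=
  {ξ | ∀ i, A (prependSeq u ξ.1 i) (prependSeq u ξ.1 (i + 1))}

open Classical in
/-- The inverse branch of `σⁿ` with values in `[u]`; it is the identity off `prependable u`. -/
noncomputable def prependWord {n : ℕ} (u : Fin n → Fin r) (ξ : OneSided A) : OneSided A :=
  if h : ξ ∈ prependable u then ⟨prependSeq u ξ.1, h⟩ else ξ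

section prependWord

variable {n : ℕ} {u : Fin n → Fin r}

lemma prependWord_coe {ξ : OneSided A} (hξ : ξ ∈ prependable u) :
    (prependWord u ξ).1 = prependSeq u ξ.1 := by
  rw [prependWord, dif_pos hξ]

lemma prependWord_mem_cyl {ξ : OneSided A} (hξ : ξ ∈ prependable u) :
    prependWord u ξ ∈ Cyl A u := fun i => by
  simp [prependWord_coe hξ, prependSeq]

lemma shift1_iterate_prependWord {ξ : OneSided A} (hξ : ξ ∈ prependable u) :
    shift1^[n] (prependWord u ξ) = ξ := by
  ext i
  simp [shift1_iterate_coe, prependWord_coe hξ, prependSeq]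

lemma prependSeq_shift1_iterate {x : OneSided A} (hx : x ∈ Cyl A u) :
    prependSeq u (shift1^[n] x).1 = x.1 := by
  funext i
  by_cases h : i < n
  · simp [prependSeq, h, hx ⟨i, h⟩]
  · simp [prependSeq, h, shift1_iterate_coe, Nat.sub_add_cancel (not_lt.1 h)]

lemma shift1_iterate_mem_prependable {x : OneSided A} (hx : x ∈ Cyl A u) :
    shift1^[n] x ∈ prependable u := by
  simpa [prependable, prependSeq_shift1_iterate hx] using x.2

lemma prependWord_shift1_iterate {x : OneSided A} (hx : x ∈ Cyl A u) :
    prependWord u (shift1^[n] x) = x :=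
  Subtype.ext <| (prependWord_coe (shift1_iterate_mem_prependable hx)).trans
    (prependSeq_shift1_iterate hx)

lemma injOn_shift1_iterate_cyl : Set.InjOn (shift1^[n]) (Cyl A u) := fun x hx y hy hxy => by
  rw [← prependWord_shift1_iterate hx, hxy, prependWord_shift1_iterate hy]

lemma image_shift1_iterate_eq {F : Set (OneSided A)} (hF : F ⊆ Cyl A u) :
    shift1^[n] '' F = prependable u ∩ prependWord u ⁻¹' F := by
  ext ξ
  constructor
  · rintro ⟨x, hx, rfl⟩
    exact ⟨shift1_iterate_mem_prependable (hF hx), by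
      rw [Set.mem_preimage, prependWord_shift1_iterate (hF hx)]; exact hx⟩
  · rintro ⟨hξ, hξF⟩
    exact ⟨_, hξF, shift1_iterate_prependWord hξ⟩

lemma measurable_prependSeq (u : Fin n → Fin r) :
    Measurable fun ξ : OneSided A => prependSeq u ξ.1 := by
  refine measurable_pi_lambda _ fun i => ?_
  by_cases h : i < n
  · simp only [prependSeq, dif_pos h]; exact measurable_const
  · simp only [prependSeq, dif_neg h]; exact measurable_coord _

lemma measurableSet_prependable (u : Fin n → Fin r) :
    MeasurableSet (prependable (A := A) u) := by
  have hseq := measurable_prependSeq (A := A) u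
  have hpairs : prependable (A := A) u = ⋂ i,
      (fun ξ => (prependSeq u ξ.1 i, prependSeq u ξ.1 (i + 1))) ⁻¹' {p | A p.1 p.2} := by
    ext; simp [prependable]
  rw [hpairs]
  exact .iInter fun i => (((measurable_pi_apply i).comp hseq).prodMk
    ((measurable_pi_apply (i + 1)).comp hseq)) (Set.toFinite _).measurableSet

lemma measurable_prependWord (u : Fin n → Fin r) : Measurable (prependWord (A := A) u) := by
  classical
  have hcoe : (fun ξ : OneSided A => (prependWord u ξ).1) =
      (prependable u).piecewise (fun ξ => prependSeq u ξ.1) Subtype.val := by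
    funext ξ
    by_cases hξ : ξ ∈ prependable u
    · simp [hξ, prependWord_coe hξ]
    · simp [hξ, prependWord]
  have h : Measurable fun ξ : OneSided A => (prependWord u ξ).1 := by
    rw [hcoe]
    exact (measurable_prependSeq u).piecewise (measurableSet_prependable u) measurable_subtype_coe
  exact h.subtype_mk

lemma measurableSet_image_shift1_iterate {F : Set (OneSided A)} (hF : MeasurableSet F)
    (hFu : F ⊆ Cyl A u) : MeasurableSet (shift1^[n] '' F) := by
  rw [image_shift1_iterate_eq hFu]
  exact (measurableSet_prependable u).inter (measurable_prependWord u hF)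

end prependWord

lemma measurableSet_image_shift1 {j : Fin r} {F : Set (OneSided A)} (hF : MeasurableSet F)
    (hFj : ∀ x ∈ F, x.1 0 = j) : MeasurableSet (shift1 '' F) :=
  measurableSet_image_shift1_iterate (n := 1) (u := fun _ => j) hF fun x hx i => by
    simpa [Subsingleton.elim i 0] using hFj x hx

lemma prependSeq_shift1_iterate_eq_Tmap {n : ℕ} {hn : 1 ≤ n} {w : Fin n → Fin r}
    {hw : AdmissibleWord A w} {z : OneSided A}
    (hz : A (w ⟨n - 1, by omega⟩) (z.1 n)) :
    prependSeq w (shift1^[n] z).1 = (Tmap hn w hw z).1 := by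
  funext i
  rw [Tmap, dif_pos hz]
  by_cases h : i < n
  · simp [prependSeq, h]
  · simp [prependSeq, h, shift1_iterate_coe, Nat.sub_add_cancel (not_lt.1 h)]

lemma shift1_iterate_mem_prependable_of_link {n : ℕ} {w : Fin n → Fin r} {z : OneSided A}
    (hn : 1 ≤ n) (hw : AdmissibleWord A w)
    (hz : A (w ⟨n - 1, by omega⟩) (z.1 n)) : shift1^[n] z ∈ prependable w := by
  have h := (Tmap hn w hw z).2
  rwa [← prependSeq_shift1_iterate_eq_Tmap hz] at h

lemma Tmap_eq_prependWord {n : ℕ} {hn : 1 ≤ n} {w : Fin n → Fin r}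
    {hw : AdmissibleWord A w} {z : OneSided A}
    (hz : A (w ⟨n - 1, by omega⟩) (z.1 n)) :
    Tmap hn w hw z = prependWord w (shift1^[n] z) :=
  Subtype.ext <| (prependSeq_shift1_iterate_eq_Tmap hz).symm.trans
    (prependWord_coe (shift1_iterate_mem_prependable_of_link hn hw hz)).symm

lemma Tmap_mem_cyl {n : ℕ} {hn : 1 ≤ n} {w : Fin n → Fin r}
    {hw : AdmissibleWord A w} {z : OneSided A}
    (hz : A (w ⟨n - 1, by omega⟩) (z.1 n)) : Tmap hn w hw z ∈ Cyl A w := by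
  rw [Tmap_eq_prependWord hz]
  exact prependWord_mem_cyl (shift1_iterate_mem_prependable_of_link hn hw hz)

lemma shift1_iterate_Tmap {n : ℕ} {hn : 1 ≤ n} {w : Fin n → Fin r}
    {hw : AdmissibleWord A w} {z : OneSided A}
    (hz : A (w ⟨n - 1, by omega⟩) (z.1 n)) :
    shift1^[n] (Tmap hn w hw z) = shift1^[n] z := by
  rw [Tmap_eq_prependWord hz]
  exact shift1_iterate_prependWord (shift1_iterate_mem_prependable_of_link hn hw hz)

/-- The Jacobian `exp(mP − Sₘφ)` of `σ^m` with respect to a conformal measure. -/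
noncomputable def shiftJacobian (φ : OneSided A → ℝ) (P : ℝ) (m : ℕ) (x : OneSided A) : ℝ≥0∞ :=
  ENNReal.ofReal (exp (m * P - birkhoffSum shift1 φ m x))

section jacobian

variable {φ : OneSided A → ℝ} {P : ℝ}

lemma measurable_birkhoffSum_shift1 (hφ : Measurable φ) (m : ℕ) :
    Measurable (birkhoffSum shift1 φ m) :=
  Finset.measurable_sum _ fun k _ => hφ.comp (measurable_shift1.iterate k)

lemma measurable_shiftJacobian (hφ : Measurable φ) (m : ℕ) :
    Measurable (shiftJacobian φ P m) :=
  (measurable_const.sub (measurable_birkhoffSum_shift1 hφ m)).exp.ennreal_ofReal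

lemma shiftJacobian_succ (m : ℕ) (x : OneSided A) :
    shiftJacobian φ P (m + 1) x =
      shiftJacobian φ P m (shift1 x) * ENNReal.ofReal (exp (P - φ x)) := by
  rw [shiftJacobian, shiftJacobian, ← ENNReal.ofReal_mul (exp_nonneg _), ← exp_add,
    birkhoffSum_succ']
  push_cast
  ring_nf

lemma shiftJacobian_inv_mul (m : ℕ) (x y : OneSided A) :
    (shiftJacobian φ P m y)⁻¹ * shiftJacobian φ P m x =
      ENNReal.ofReal (exp (birkhoffSum shift1 φ m y - birkhoffSum shift1 φ m x)) := by
  rw [shiftJacobian, shiftJacobian, ← ENNReal.ofReal_inv_of_pos (exp_pos _), ← exp_neg,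
    ← ENNReal.ofReal_mul (exp_nonneg _), ← exp_add]
  ring_nf

end jacobian

end OneSided

namespace ConformalPair

open OneSided

variable {A : Fin r → Fin r → Prop} {φ : OneSided A → ℝ} {P : ℝ} {μ : Measure (OneSided A)}

lemma setLIntegral_image_shift1 (hpair : ConformalPair A φ P μ)
    (hφ : Measurable φ) {j : Fin r} {F : Set (OneSided A)} (hF : MeasurableSet F)
    (hFj : ∀ x ∈ F, x.1 0 = j) {g : OneSided A → ℝ≥0∞} (hg : Measurable g) :
    ∫⁻ y in shift1 '' F, g y ∂μ = ∫⁻ x in F, g (shift1 x) * ENNReal.ofReal (exp (P - φ x)) ∂μ := by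
  have hρ : Measurable fun x => ENNReal.ofReal (exp (P - φ x)) :=
    (measurable_const.sub hφ).exp.ennreal_ofReal
  have hmap : μ.restrict (shift1 '' F) =
      ((μ.restrict F).withDensity fun x => ENNReal.ofReal (exp (P - φ x))).map shift1 := by
    ext B hB
    rw [Measure.map_apply measurable_shift1 hB, withDensity_apply _ (measurable_shift1 hB),
      Measure.restrict_restrict (measurable_shift1 hB), Measure.restrict_apply hB,
      Set.inter_comm, ← Set.image_inter_preimage, Set.inter_comm,
      hpair.2 j _ ((measurable_shift1 hB).inter hF) fun x hx => hFj x hx.2]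
  rw [hmap, lintegral_map hg measurable_shift1,
    lintegral_withDensity_eq_lintegral_mul _ hρ (g := fun x => g (shift1 x))
      (hg.comp measurable_shift1)]
  simp only [Pi.mul_apply, mul_comm]

lemma setLIntegral_image_shift1_iterate (hpair : ConformalPair A φ P μ)
    (hφ : Measurable φ) {n : ℕ} {u : Fin n → Fin r} {F : Set (OneSided A)}
    (hF : MeasurableSet F) (hFu : F ⊆ Cyl A u) {g : OneSided A → ℝ≥0∞} (hg : Measurable g) :
    ∫⁻ y in shift1^[n] '' F, g y ∂μ = ∫⁻ x in F, g (shift1^[n] x) * shiftJacobian φ P n x ∂μ := by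
  induction n generalizing F with
  | zero => simp [shiftJacobian, birkhoffSum]
  | succ m ih =>
    have hFj : ∀ x ∈ F, x.1 0 = u 0 := fun x hx => hFu hx 0
    have hσF : shift1 '' F ⊆ Cyl A (Fin.tail u) := by
      rintro _ ⟨x, hx, rfl⟩ i
      exact hFu hx i.succ
    rw [Function.iterate_succ, Set.image_comp, ih (measurableSet_image_shift1 hF hFj) hσF,
      hpair.setLIntegral_image_shift1 hφ hF hFj
        (g := fun y => g (shift1^[m] y) * shiftJacobian φ P m y)
        ((hg.comp (measurable_shift1.iterate m)).mul (measurable_shiftJacobian hφ m))]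
    simp only [Function.comp_apply, shiftJacobian_succ, mul_assoc]

lemma measure_eq_setLIntegral_image (hpair : ConformalPair A φ P μ)
    (hφ : Measurable φ) {n : ℕ} {u : Fin n → Fin r} {F : Set (OneSided A)}
    (hF : MeasurableSet F) (hFu : F ⊆ Cyl A u) :
    μ F = ∫⁻ ξ in shift1^[n] '' F, (shiftJacobian φ P n (prependWord u ξ))⁻¹ ∂μ := by
  rw [hpair.setLIntegral_image_shift1_iterate hφ hF hFu
    (g := fun ξ => (shiftJacobian φ P n (prependWord u ξ))⁻¹)
    ((measurable_shiftJacobian hφ n).comp (measurable_prependWord u)).inv, ← setLIntegral_one]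
  refine (setLIntegral_congr_fun hF fun x hx => ?_).symm
  rw [prependWord_shift1_iterate (hFu hx), shiftJacobian_inv_mul, sub_self, exp_zero,
    ENNReal.ofReal_one]

end ConformalPair

open OneSided in
/-- If `(P, μ)` is a conformal pair for a Hölder `φ` on a transitive one-sided
subshift, `v` and `w` are admissible words of length `n ≥ 1`, and `T` is the
map replacing the first `n` coordinates by `w` on
`Dom = {z ∈ [v] : A (w (n−1)) (z n)}`, then `T` is injective on `Dom` and
`μ(T '' E) = ∫_E exp(∑_{k<n} (φ(σ^k (T z)) − φ(σ^k z))) dμ` for Borel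
`E ⊆ Dom`. -/
theorem conformal_measure_word_holonomy
    {A : Fin r → Fin r → Prop}
    (φ : OneSided A → ℝ) (hφ : IsHolderWrt dist1 φ)
    (P : ℝ) (μ : Measure (OneSided A)) (hpair : ConformalPair A φ P μ)
    (n : ℕ) (hn : 1 ≤ n) (v w : Fin n → Fin r)
    (hw : AdmissibleWord A w) :
    Set.InjOn (Tmap hn w hw)
        (Cyl A v ∩ {z : OneSided A | A (w ⟨n - 1, by omega⟩) (z.1 n)}) ∧
      ∀ E : Set (OneSided A), MeasurableSet E →
        E ⊆ Cyl A v ∩ {z : OneSided A | A (w ⟨n - 1, by omega⟩) (z.1 n)} →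
        μ (Tmap hn w hw '' E) =
          ∫⁻ z in E, ENNReal.ofReal (Real.exp (∑ k ∈ Finset.range n,
            (φ (shift1^[k] (Tmap hn w hw z)) - φ (shift1^[k] z)))) ∂μ := by
  have hφm : Measurable φ := (continuous_of_isHolderWrt hφ).measurable
  refine ⟨fun x hx y hy hxy => injOn_shift1_iterate_cyl hx.1 hy.1 ?_, fun E hE hED => ?_⟩
  · rw [← shift1_iterate_Tmap (hn := hn) (hw := hw) hx.2, hxy, shift1_iterate_Tmap hy.2]
  have hEv : E ⊆ Cyl A v := hED.trans Set.inter_subset_left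
  have hTE : Tmap hn w hw '' E ⊆ Cyl A w :=
    Set.image_subset_iff.2 fun z hz => Tmap_mem_cyl (hED hz).2
  have himage : shift1^[n] '' (Tmap hn w hw '' E) = shift1^[n] '' E := by
    rw [Set.image_image]
    exact Set.image_congr fun z hz => shift1_iterate_Tmap (hED hz).2
  have hTEm : MeasurableSet (Tmap hn w hw '' E) := by
    rw [← injOn_shift1_iterate_cyl.preimage_image_inter hTE, himage]
    exact (measurable_shift1.iterate n (measurableSet_image_shift1_iterate hE hEv)).inter
      (measurableSet_cyl w)
  calc μ (Tmap hn w hw '' E)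
      = ∫⁻ ξ in shift1^[n] '' E, (shiftJacobian φ P n (prependWord w ξ))⁻¹ ∂μ := by
        rw [hpair.measure_eq_setLIntegral_image hφm hTEm hTE, himage]
    _ = ∫⁻ x in E, (shiftJacobian φ P n (prependWord w (shift1^[n] x)))⁻¹ *
          shiftJacobian φ P n x ∂μ :=
        hpair.setLIntegral_image_shift1_iterate hφm hE hEv
          (g := fun ξ => (shiftJacobian φ P n (prependWord w ξ))⁻¹)
          ((measurable_shiftJacobian hφm n).comp (measurable_prependWord w)).inv
    _ = _ := setLIntegral_congr_fun hE fun x hx => by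
        rw [← Tmap_eq_prependWord (hED hx).2, shiftJacobian_inv_mul, birkhoffSum, birkhoffSum,
          ← Finset.sum_sub_distrib]
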